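/- Let G be a group, 𝔤 = (g_1,…,g_n) a finite string of elements of G, and ℰ = {E_1,…,E_m} a finite partition of G. If some subsystem of the system of configuration equations Eq(𝔤,ℰ) is normal, then G is not amenable (there is no finitely additive, left-invariant probability measure on all subsets of G) and G admits a paradoxical decomposition. -/

import Mathlib

namespace PaperStmt

/-- A (0,1)-matrix: every entry is 0 or 1. -/
def ZeroOneMat {α β : Type*} (M : Matrix α β ℝ) : Prop := ∀ i j, M i j = 0 ∨ M i j = 1

/-- The lower-triangular matrix `T` with all entries on and below the diagonal equal to 1. -/
def Tmat (n : ℕ) : Matrix (Fin n) (Fin n) ℝ := fun i j => if j ≤ i then 1 else 0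

/-- The permutation matrix associated to a permutation `σ` (row `i` is `e_{σ i}`). -/
def permMat {n : ℕ} (σ : Equiv.Perm (Fin n)) : Matrix (Fin n) (Fin n) ℝ :=
  fun i j => if σ i = j then 1 else 0

/-- Cyclic successor on `Fin n`. -/
def cycSucc {n : ℕ} (i : Fin n) : Fin n := ⟨(i.val + 1) % n, Nat.mod_lt _ i.pos⟩

/-- `M⁺`: the matrix `M` with its rows cyclically shifted up by one. -/
def shiftRows {n : ℕ} {ι : Type*} (M : Matrix (Fin n) ι ℝ) : Matrix (Fin n) ι ℝ :=
  fun i j => M (cycSucc i) j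

/-- The system `(B - A) X = 0` is *normal* if there is a permutation matrix `P` such that
every entry of `T P (B - A) - P⁺ A` is an integer `≥ -1`. -/
def IsNormal {n : ℕ} {ι : Type*} (A B : Matrix (Fin n) ι ℝ) : Prop :=
  ∃ σ : Equiv.Perm (Fin n), ∀ (i : Fin n) (j : ι),
    ∃ z : ℤ,
      (Tmat n * (permMat σ * (B - A)) - shiftRows (permMat σ) * A) i j = (z : ℝ) ∧ -1 ≤ z

end PaperStmt

open Pointwise

namespace PaperStmt

/-- A group admits a paradoxical decomposition: there are pairwise disjoint subsets
`A 1, …, A p, B 1, …, B q` and group elements `s i`, `t j` such that the translates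
`s i • A i` partition `G` and the translates `t j • B j` partition `G`. -/
def IsParadoxical (G : Type*) [Group G] : Prop :=
  ∃ (p q : ℕ), 0 < p ∧ 0 < q ∧
    ∃ (A : Fin p → Set G) (B : Fin q → Set G) (s : Fin p → G) (t : Fin q → G),
      (∀ i i', i ≠ i' → Disjoint (A i) (A i')) ∧
      (∀ j j', j ≠ j' → Disjoint (B j) (B j')) ∧
      (∀ i j, Disjoint (A i) (B j)) ∧
      (⋃ i, s i • A i) = Set.univ ∧
      (∀ i i', i ≠ i' → Disjoint (s i • A i) (s i' • A i')) ∧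
      (⋃ j, t j • B j) = Set.univ ∧
      (∀ j j', j ≠ j' → Disjoint (t j • B j) (t j' • B j'))

/-- A finitely additive, left-invariant probability measure defined on all subsets of `G`
(the defining property of amenability for a discrete group). -/
def HasLeftInvariantMean (G : Type*) [Group G] : Prop :=
  ∃ μ : Set G → ℝ,
    (∀ A : Set G, 0 ≤ μ A ∧ μ A ≤ 1) ∧
    μ Set.univ = 1 ∧
    (∀ A B : Set G, Disjoint A B → μ (A ∪ B) = μ A + μ B) ∧
    (∀ (g : G) (A : Set G), μ (g • A) = μ A)

/-- A *complete* paradoxical decomposition with `p + q` pieces: the pieces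
`A 1, …, A p, B 1, …, B q` form a partition of `G`, and the translates
`s i • A i` and `t j • B j` each form a partition of `G`. -/
def IsCompleteParadox (G : Type*) [Group G] (p q : ℕ) : Prop :=
  ∃ (A : Fin p → Set G) (B : Fin q → Set G) (s : Fin p → G) (t : Fin q → G),
    (∀ i i', i ≠ i' → Disjoint (A i) (A i')) ∧
    (∀ j j', j ≠ j' → Disjoint (B j) (B j')) ∧
    (∀ i j, Disjoint (A i) (B j)) ∧
    ((⋃ i, A i) ∪ (⋃ j, B j)) = Set.univ ∧
    (⋃ i, s i • A i) = Set.univ ∧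
    (∀ i i', i ≠ i' → Disjoint (s i • A i) (s i' • A i')) ∧
    (⋃ j, t j • B j) = Set.univ ∧
    (∀ j j', j ≠ j' → Disjoint (t j • B j) (t j' • B j'))

/-- The Tarski number of a group: the least total number of pieces `p + q` over all
complete paradoxical decompositions of `G`, and `∞` if there is none. -/
noncomputable def tarskiNumber (G : Type*) [Group G] : ℕ∞ :=
  sInf {N : ℕ∞ | ∃ p q : ℕ, N = ((p + q : ℕ) : ℕ∞) ∧ IsCompleteParadox G p q}

end PaperStmt

open Pointwise

namespace PaperStmt

/-- `E : Fin m → Set G` is a partition of `G`: pairwise disjoint with union all of `G`. -/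
def IsPartition {G : Type*} {m : ℕ} (E : Fin m → Set G) : Prop :=
  (∀ i j, i ≠ j → Disjoint (E i) (E j)) ∧ (⋃ i, E i) = Set.univ

/-- `C = (c_0, …, c_n)` is a configuration for the pair `(g, E)`: there is `x ∈ E (c 0)`
with `g i * x ∈ E (c i)` for `1 ≤ i ≤ n`. -/
def IsConfig {G : Type*} [Group G] {n m : ℕ} (g : Fin n → G) (E : Fin m → Set G)
    (C : Fin (n + 1) → Fin m) : Prop :=
  ∃ x : G, x ∈ E (C 0) ∧ ∀ i : Fin n, g i * x ∈ E (C i.succ)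

/-- `x_0(C) = E_{c_0} ∩ ⋂_{j=1}^n g_j⁻¹ E_{c_j}`. -/
def xzero {G : Type*} [Group G] {n m : ℕ} (g : Fin n → G) (E : Fin m → Set G)
    (C : Fin (n + 1) → Fin m) : Set G :=
  E (C 0) ∩ ⋂ i : Fin n, (g i)⁻¹ • E (C i.succ)

/-- The string `(g_0, g_1, …, g_n)` with `g_0 = e`. -/
def ghat {G : Type*} [Group G] {n : ℕ} (g : Fin n → G) : Fin (n + 1) → G := Fin.cons 1 g

/-- `x_j(C) = g_j • x_0(C)` for `0 ≤ j ≤ n` (with `g_0 = e`). -/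
def xj {G : Type*} [Group G] {n m : ℕ} (g : Fin n → G) (E : Fin m → Set G)
    (C : Fin (n + 1) → Fin m) (j : Fin (n + 1)) : Set G :=
  ghat g j • xzero g E C

/-- The real-valued indicator of a proposition. -/
noncomputable def ind (P : Prop) : ℝ :=
  letI := Classical.propDecidable P; if P then 1 else 0

/-- `f` is a solution of the system of configuration equations `Eq(g, E)`:
for all `1 ≤ i ≤ m` and `0 ≤ j, k ≤ n`,
`∑_{C : x_j(C) ⊆ E_i} f C = ∑_{C : x_k(C) ⊆ E_i} f C`. -/
def IsEqSolution {G : Type*} [Group G] {n m : ℕ} (g : Fin n → G) (E : Fin m → Set G)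
    (f : {C : Fin (n + 1) → Fin m // IsConfig g E C} → ℝ) : Prop :=
  ∀ (i : Fin m) (j k : Fin (n + 1)),
    ∑ᶠ C ∈ {C : {C : Fin (n + 1) → Fin m // IsConfig g E C} | xj g E C.1 j ⊆ E i}, f C =
    ∑ᶠ C ∈ {C : {C : Fin (n + 1) → Fin m // IsConfig g E C} | xj g E C.1 k ⊆ E i}, f C

end PaperStmt

namespace PaperStmt

/-!
The sets `xzero g E C`, `C` a configuration, partition `G`. For a triple `(i, j, k)`, the
translates `g_j • x₀(C)` with `x_j(C) ⊆ E_i` tile `E_i`, and so do the `g_k • x₀(C)` with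
`x_k(C) ⊆ E_i`; hence, by finitely many translations, the pieces of the second kind can be
exchanged for those of the first kind. Start with one copy of every piece and perform the
exchanges of the subsystem in the order given by the permutation matrix of the normality
condition: normality says that every exchange only consumes copies that are available, and
positivity of `∑_t (W_t - V_t)` says that at the end every piece has two disjoint copies. Two
disjoint copies of `G` give a paradoxical decomposition, and a paradoxical group has no invariant
mean.
-/

open Function Set

def Equidecomposable (G : Type*) {X : Type*} [Group G] [MulAction G X] (A B : Set X) : Prop :=
  ∃ f : X → X, BijOn f A B ∧ ∃ S : Finset G, Equidecomp.IsDecompOn f A S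

section Equidecomposable

variable {G X : Type*} [Group G] [MulAction G X]

theorem Equidecomposable.refl (A : Set X) : Equidecomposable G A A :=
  ⟨id, bijOn_id A, {1}, fun a _ => ⟨1, Finset.mem_singleton_self 1, (one_smul G a).symm⟩⟩

theorem equidecomposable_smul (A : Set X) (γ : G) : Equidecomposable G A (γ • A) := by
  refine ⟨(γ • ·), ?_, {γ}, fun a _ => ⟨γ, Finset.mem_singleton_self γ, rfl⟩⟩
  rw [← Set.image_smul]
  exact (MulAction.injective γ).injOn.bijOn_image

theorem equidecomposable_smul_smul (A : Set X) (a b : G) :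
    Equidecomposable G (a • A) (b • A) := by
  simpa [smul_smul] using equidecomposable_smul (a • A) (b * a⁻¹)

theorem Equidecomposable.trans {A B C : Set X} (hAB : Equidecomposable G A B)
    (hBC : Equidecomposable G B C) : Equidecomposable G A C := by
  classical
  obtain ⟨f, hf, S, hS⟩ := hAB
  obtain ⟨g, hg, T, hT⟩ := hBC
  exact ⟨g ∘ f, hg.comp hf, T * S, hT.comp hS hf.mapsTo⟩

theorem Equidecomposable.iUnion {ι : Type*} [Finite ι] {A B : ι → Set X}
    (hA : Pairwise (Disjoint on A)) (hB : Pairwise (Disjoint on B))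
    (h : ∀ i, Equidecomposable G (A i) (B i)) : Equidecomposable G (⋃ i, A i) (⋃ i, B i) := by
  classical
  have := Fintype.ofFinite ι
  choose f hf S hS using h
  let F : X → X := fun x => if hx : ∃ i, x ∈ A i then f hx.choose x else x
  have hF : ∀ i, EqOn F (f i) (A i) := fun i x hx => by
    have hex : ∃ i, x ∈ A i := ⟨i, hx⟩
    simp only [F, dif_pos hex]
    rw [hA.eq (not_disjoint_iff.mpr ⟨x, hex.choose_spec, hx⟩)]
  refine ⟨F, bijOn_iUnion (fun i => (hf i).congr (hF i).symm) ?_, Finset.univ.biUnion S, ?_⟩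
  · simp only [InjOn, mem_iUnion]
    rintro x ⟨i, hx⟩ y ⟨j, hy⟩ hxy
    rw [hF i hx, hF j hy] at hxy
    obtain rfl : i = j :=
      hB.eq (not_disjoint_iff.mpr ⟨_, (hf i).mapsTo hx, hxy ▸ (hf j).mapsTo hy⟩)
    exact (hf i).injOn hx hy hxy
  · simp only [Equidecomp.IsDecompOn, mem_iUnion]
    rintro x ⟨i, hx⟩
    obtain ⟨γ, hγ, hfx⟩ := hS i x hx
    exact ⟨γ, Finset.mem_biUnion.mpr ⟨i, Finset.mem_univ i, hγ⟩, (hF i hx).trans hfx⟩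

theorem Equidecomposable.split_iUnion {ι : Type*} {A : ι → Set X} {B : Set X}
    (h : Equidecomposable G (⋃ i, A i) B) (hA : Pairwise (Disjoint on A)) :
    ∃ B' : ι → Set X, Pairwise (Disjoint on B') ∧ (∀ i, B' i ⊆ B) ∧
      ∀ i, Equidecomposable G (A i) (B' i) := by
  obtain ⟨f, hf, S, hS⟩ := h
  refine ⟨fun i => f '' A i, fun i j hij => ?_, fun i => ?_, fun i =>
    ⟨f, (hf.injOn.mono (subset_iUnion A i)).bijOn_image, S,
      hS.mono (subset_iUnion A i) fun _ _ => rfl⟩⟩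
  · rw [onFun, disjoint_iff_inter_eq_empty, ← hf.injOn.image_inter (subset_iUnion A i)
      (subset_iUnion A j), (hA hij).inter_eq, image_empty]
  · exact hf.image_eq ▸ image_mono (subset_iUnion A i)

end Equidecomposable

section Paradox

variable {G : Type*} [Group G]

theorem Equidecomposable.exists_fin_pieces {A : Set G} (h : Equidecomposable G univ A) :
    ∃ (p : ℕ) (D : Fin p → Set G) (s : Fin p → G), 0 < p ∧ Pairwise (Disjoint on D) ∧
      (∀ i, D i ⊆ A) ∧ (⋃ i, s i • D i) = univ ∧ Pairwise (Disjoint on fun i => s i • D i) := by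
  obtain ⟨f, hf, S, hS⟩ := h
  choose γ hγS hγ using fun x => hS x (mem_univ x)
  set e := S.equivFin.symm
  set T : Fin S.card → Set G := fun i => {x | γ x = e i}
  have hT : Pairwise (Disjoint on T) := fun i j hij =>
    disjoint_left.mpr fun x hi hj => hij (e.injective (Subtype.ext (hi.symm.trans hj)))
  have hfT : ∀ i, f '' T i = (e i : G) • T i := fun i => by
    rw [← image_smul]
    exact image_congr fun x hx => (hγ x).trans (congrArg (· • x) hx)
  refine ⟨S.card, fun i => f '' T i, fun i => (e i : G)⁻¹, Finset.card_pos.mpr ⟨γ 1, hγS 1⟩,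
    fun i j hij => ?_, fun i => hf.image_eq ▸ image_mono (subset_univ _), ?_, ?_⟩
  · rw [onFun, disjoint_image_iff (injOn_univ.mp hf.injOn)]
    exact hT hij
  · simp only [hfT, inv_smul_smul]
    exact eq_univ_of_forall fun x => mem_iUnion.mpr ⟨e.symm ⟨γ x, hγS x⟩, by simp [T]⟩
  · simpa only [hfT, inv_smul_smul] using hT

theorem isParadoxical_of_equidecomposable {A B : Set G} (hA : Equidecomposable G univ A)
    (hB : Equidecomposable G univ B) (hAB : Disjoint A B) : IsParadoxical G := by
  obtain ⟨p, D, s, hp, hD, hDA, hsD, hsDd⟩ := hA.exists_fin_pieces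
  obtain ⟨q, D', s', hq, hD', hDB, hsD', hsDd'⟩ := hB.exists_fin_pieces
  exact ⟨p, q, hp, hq, D, D', s, s', hD, hD', fun i j => hAB.mono (hDA i) (hDB j),
    hsD, hsDd, hsD', hsDd'⟩

end Paradox

theorem apply_iUnion_eq_sum_of_additive {α ι : Type*} [Fintype ι] {μ : Set α → ℝ}
    (hadd : ∀ A B : Set α, Disjoint A B → μ (A ∪ B) = μ A + μ B) {A : ι → Set α}
    (hA : Pairwise (Disjoint on A)) : μ (⋃ i, A i) = ∑ i, μ (A i) := by
  classical
  have hempty : μ ∅ = 0 := by simpa using hadd ∅ ∅ (disjoint_empty ∅)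
  suffices ∀ s : Finset ι, μ (⋃ i ∈ s, A i) = ∑ i ∈ s, μ (A i) by simpa using this Finset.univ
  intro s
  induction s using Finset.induction_on with
  | empty => simpa using hempty
  | insert a s ha ih =>
    rw [Finset.set_biUnion_insert, hadd _ _ ?_, ih, Finset.sum_insert ha]
    exact disjoint_iUnion₂_right.mpr fun i hi => hA (ne_of_mem_of_not_mem hi ha).symm

theorem not_hasLeftInvariantMean_of_isParadoxical {G : Type*} [Group G]
    (hpar : IsParadoxical G) : ¬ HasLeftInvariantMean G := by
  rintro ⟨μ, hbd, huniv, hadd, hinv⟩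
  obtain ⟨p, q, -, -, A, B, s, t, hA, hB, hAB, hsA, hsAd, htB, htBd⟩ := hpar
  have hone : ∀ {k : ℕ} {D : Fin k → Set G} {s : Fin k → G}, Pairwise (Disjoint on D) →
      Pairwise (Disjoint on fun i => s i • D i) → (⋃ i, s i • D i) = univ →
      μ (⋃ i, D i) = 1 := fun {k D s} hD hsD hunion => by
    rw [apply_iUnion_eq_sum_of_additive hadd hD, ← huniv, ← hunion,
      apply_iUnion_eq_sum_of_additive hadd hsD]
    simp only [hinv]
  have hdisj : Disjoint (⋃ i, A i) (⋃ j, B j) :=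
    disjoint_iUnion_left.mpr fun i => disjoint_iUnion_right.mpr (hAB i)
  linarith [hbd ((⋃ i, A i) ∪ ⋃ j, B j), hadd _ _ hdisj, hone hA hsAd hsA, hone hB htBd htB]

universe u

theorem natCard_fiber_sumElim {α β κ : Type*} [Finite α] [Finite β] (f : α → κ) (g : β → κ)
    (c : κ) :
    Nat.card {x // Sum.elim f g x = c} = Nat.card {a // f a = c} + Nat.card {b // g b = c} := by
  rw [Nat.card_congr Equiv.subtypeSum, Nat.card_sum]
  rfl

theorem natCard_fiber_val {κ : Type*} (S : Set κ) (c : κ) :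
    (Nat.card {d : S // (d : κ) = c} : ℝ) = S.indicator 1 c := by
  by_cases hc : c ∈ S
  · have : Unique {d : S // (d : κ) = c} :=
      ⟨⟨⟨⟨c, hc⟩, rfl⟩⟩, fun d => Subtype.ext (Subtype.ext d.2)⟩
    simp [hc]
  · have : IsEmpty {d : S // (d : κ) = c} := ⟨fun d => hc (d.2 ▸ d.1.2)⟩
    simp [hc]

theorem natCard_fiber_compl_range {ι κ : Type*} [Finite ι] (lab : ι → κ) {K : Set κ}
    (pick : K → ι) (hpick : ∀ c, lab (pick c) = c) (c : κ) :
    (Nat.card {r : {r // r ∉ range pick} // lab r = c} : ℝ) =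
      Nat.card {r // lab r = c} - K.indicator 1 c := by
  classical
  have hpick_inj : Injective pick := fun c d h => Subtype.ext ((hpick c).symm.trans (h ▸ hpick d))
  let e : {r // r ∉ range pick} ⊕ K ≃ ι := (Equiv.sumComm _ _).trans
    ((Equiv.sumCongr (Equiv.ofInjective pick hpick_inj) (Equiv.refl _)).trans
      (Equiv.sumCompl (· ∈ range pick)))
  have := Finite.of_injective pick hpick_inj
  have he : Nat.card {x // Sum.elim (fun r : {r // r ∉ range pick} => lab r) (fun d : K => d) x =
      c} = Nat.card {r // lab r = c} :=
    Nat.card_congr (e.subtypeEquiv fun x => by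
      rcases x with r | d
      exacts [Iff.rfl, (hpick d).symm ▸ Iff.rfl])
  rw [← he, natCard_fiber_sumElim, Nat.cast_add, natCard_fiber_val]
  ring

def HasCopies (G : Type*) {X : Type*} [Group G] [MulAction G X] {κ : Type u} (P : κ → Set X)
    (N : κ → ℝ) : Prop :=
  ∃ (ι : Type u) (_ : Finite ι) (lab : ι → κ) (Y : ι → Set X),
    Pairwise (Disjoint on Y) ∧ (∀ r, Equidecomposable G (P (lab r)) (Y r)) ∧
      ∀ c, N c ≤ Nat.card {r // lab r = c}

section Copies

variable {G X : Type*} [Group G] [MulAction G X] {κ : Type u} [Finite κ] {P : κ → Set X}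
  {N : κ → ℝ}

theorem hasCopies_one (hP : Pairwise (Disjoint on P)) : HasCopies G P 1 :=
  ⟨κ, inferInstance, id, P, hP, fun c => .refl _, fun c => by simp⟩

/- One copy of each `P c`, `c ∈ K`, is consumed: glued together they form a copy of
`⋃ c ∈ K, P c`, hence of `⋃ c ∈ J, P c`, which is then cut into copies of the `P c`, `c ∈ J`. -/
theorem HasCopies.exchange (hP : Pairwise (Disjoint on P)) {K J : Set κ}
    (hJK : Equidecomposable G (⋃ c ∈ J, P c) (⋃ c ∈ K, P c)) (h : HasCopies G P N)
    (hN : ∀ c ∈ K, 1 ≤ N c) : HasCopies G P (N + J.indicator 1 - K.indicator 1) := by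
  classical
  obtain ⟨ι, _, lab, Y, hY, hYP, hNY⟩ := h
  rw [biUnion_eq_iUnion, biUnion_eq_iUnion] at hJK
  have hfiber : ∀ c : K, ∃ r, lab r = c := fun c => by
    have : 0 < Nat.card {r // lab r = c} := by
      exact_mod_cast zero_lt_one.trans_le ((hN c c.2).trans (hNY c))
    obtain ⟨r⟩ := (Nat.card_pos_iff.mp this).1
    exact ⟨r.1, r.2⟩
  choose pick hpick using hfiber
  have hpick_inj : Injective pick := fun c d h => Subtype.ext ((hpick c).symm.trans (h ▸ hpick d))
  have hcopy : Equidecomposable G (⋃ c : J, P c) (⋃ c : K, Y (pick c)) :=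
    hJK.trans <| .iUnion (hP.comp_of_injective Subtype.val_injective)
        (hY.comp_of_injective hpick_inj) fun c => hpick c ▸ hYP (pick c)
  obtain ⟨Z, hZ, hZY, hZP⟩ := hcopy.split_iUnion (hP.comp_of_injective Subtype.val_injective)
  refine ⟨{r // r ∉ range pick} ⊕ J, inferInstance, Sum.elim (fun r => lab r) (↑),
    Sum.elim (fun r => Y r) Z, ?_, ?_, fun c => ?_⟩
  · rintro (r | c) (r' | c') hne
    · exact hY fun h => hne (congrArg Sum.inl (Subtype.ext h))
    · exact (disjoint_iUnion_right.mpr fun d => hY fun h => r.2 ⟨d, h.symm⟩).mono_right (hZY c')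
    · exact (disjoint_iUnion_left.mpr fun d => hY fun h => r'.2 ⟨d, h⟩).mono_left (hZY c)
    · exact hZ fun h => hne (congrArg Sum.inr h)
  · rintro (r | c)
    exacts [hYP r, hZP c]
  · rw [natCard_fiber_sumElim]
    push_cast
    rw [natCard_fiber_compl_range lab pick hpick, natCard_fiber_val]
    simp only [Pi.add_apply, Pi.sub_apply]
    linarith [hNY c]

theorem HasCopies.exchange_iterate (hP : Pairwise (Disjoint on P)) {p : ℕ} (K J : Fin p → Set κ)
    (hJK : ∀ t, Equidecomposable G (⋃ c ∈ J t, P c) (⋃ c ∈ K t, P c)) (h : HasCopies G P N)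
    (hN : ∀ t, ∀ c ∈ K t,
      1 ≤ N c + ∑ u ∈ Finset.Iio t, ((J u).indicator 1 c - (K u).indicator 1 c)) :
    HasCopies G P (N + ∑ t, ((J t).indicator 1 - (K t).indicator 1)) := by
  suffices ∀ s ≤ p, HasCopies G P (N + ∑ t ∈ Finset.univ.filter (fun t : Fin p => (t : ℕ) < s),
      ((J t).indicator 1 - (K t).indicator 1)) by
    simpa using this p le_rfl
  intro s hs
  induction s with
  | zero => simpa using h
  | succ s ih =>
    have hIio : Finset.Iio (⟨s, hs⟩ : Fin p) =
        Finset.univ.filter (fun t : Fin p => (t : ℕ) < s) := by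
      ext t
      simp [Fin.lt_def]
    have hfilter : Finset.univ.filter (fun t : Fin p => (t : ℕ) < s + 1) =
        insert ⟨s, hs⟩ (Finset.univ.filter (fun t : Fin p => (t : ℕ) < s)) := by
      ext t
      simp only [Finset.mem_filter, Finset.mem_univ, true_and, Finset.mem_insert, Fin.ext_iff]
      omega
    rw [hfilter, Finset.sum_insert (by simp)]
    convert (ih (by omega)).exchange hP (hJK ⟨s, hs⟩) (fun c hc => ?_) using 1
    · abel
    · simpa [← hIio, Finset.sum_apply] using hN ⟨s, hs⟩ c hc

end Copies

theorem HasCopies.isParadoxical {G : Type*} [Group G] {κ : Type u} [Finite κ] {P : κ → Set G}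
    {N : κ → ℝ} (hP : Pairwise (Disjoint on P)) (hcover : ⋃ c, P c = univ)
    (h : HasCopies G P N) (hN : ∀ c, 1 < N c) : IsParadoxical G := by
  obtain ⟨ι, _, lab, Y, hY, hYP, hNY⟩ := h
  have htwo : ∀ c, ∃ r₁ r₂, r₁ ≠ r₂ ∧ lab r₁ = c ∧ lab r₂ = c := fun c => by
    have : 1 < Nat.card {r // lab r = c} := by exact_mod_cast (hN c).trans_le (hNY c)
    obtain ⟨⟨r₁, h₁⟩, ⟨r₂, h₂⟩, hne⟩ := (Finite.one_lt_card_iff_nontrivial.mp this).exists_pair_ne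
    exact ⟨r₁, r₂, fun h => hne (Subtype.ext h), h₁, h₂⟩
  choose r₁ r₂ hne h₁ h₂ using htwo
  have hcopy : ∀ r : κ → ι, (∀ c, lab (r c) = c) →
      Equidecomposable G univ (⋃ c, Y (r c)) := fun r hr => by
    rw [← hcover]
    exact .iUnion hP (hY.comp_of_injective fun c d h => (hr c).symm.trans (h ▸ hr d))
      fun c => by simpa only [hr] using hYP (r c)
  refine isParadoxical_of_equidecomposable (hcopy r₁ h₁) (hcopy r₂ h₂) ?_
  refine disjoint_iUnion_left.mpr fun c => disjoint_iUnion_right.mpr fun d => hY fun h => ?_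
  obtain rfl : c = d := (h₁ c).symm.trans (h ▸ h₂ d)
  exact hne c h

section Normal

variable {n : ℕ} {ι : Type*}

theorem permMat_mul_apply (σ : Equiv.Perm (Fin n)) (M : Matrix (Fin n) ι ℝ) (i : Fin n)
    (j : ι) : (permMat σ * M) i j = M (σ i) j := by
  simp [Matrix.mul_apply, permMat]

theorem Tmat_mul_apply (M : Matrix (Fin n) ι ℝ) (i : Fin n) (j : ι) :
    (Tmat n * M) i j = ∑ k ∈ Finset.Iic i, M k j := by
  simp only [Matrix.mul_apply, Tmat, ite_mul, one_mul, zero_mul, Finset.sum_ite,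
    Finset.sum_const_zero, add_zero]
  congr 1
  ext k
  simp

theorem shiftRows_mul_apply (M : Matrix (Fin n) (Fin n) ℝ) (A : Matrix (Fin n) ι ℝ) (i : Fin n)
    (j : ι) : (shiftRows M * A) i j = (M * A) (cycSucc i) j :=
  rfl

/- Entry `(i, j)` of `T P (B - A) - P⁺ A` is `∑_{k ≤ i} (B - A) (σ k) j - A (σ (i + 1)) j`; being
`≥ -1`, it forces the partial sum to be `≥ 0` wherever `A (σ (i + 1)) j = 1`. -/
theorem IsNormal.exists_perm_sum_Iio_nonneg {A B : Matrix (Fin n) ι ℝ} (h : IsNormal A B) :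
    ∃ σ : Equiv.Perm (Fin n), ∀ t j, A (σ t) j = 1 →
      0 ≤ ∑ u ∈ Finset.Iio t, (B (σ u) j - A (σ u) j) := by
  obtain ⟨σ, hσ⟩ := h
  refine ⟨σ, fun ⟨t, ht⟩ j hA => ?_⟩
  cases t with
  | zero =>
    have hIio : Finset.Iio (⟨0, ht⟩ : Fin n) = ∅ := by
      ext u
      simp [Fin.lt_def]
    simp [hIio]
  | succ s =>
    obtain ⟨z, hz, hz1⟩ := hσ ⟨s, by omega⟩ j
    have hcyc : cycSucc (⟨s, by omega⟩ : Fin n) = ⟨s + 1, ht⟩ := Fin.ext (Nat.mod_eq_of_lt ht)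
    have hIio : Finset.Iio (⟨s + 1, ht⟩ : Fin n) = Finset.Iic ⟨s, by omega⟩ := by
      ext u
      simp [Fin.lt_def, Fin.le_def]
    rw [Matrix.sub_apply, Tmat_mul_apply, shiftRows_mul_apply, permMat_mul_apply, hcyc, hA] at hz
    simp only [permMat_mul_apply, Matrix.sub_apply] at hz
    have : (-1 : ℝ) ≤ z := by exact_mod_cast hz1
    rw [hIio]
    linarith

end Normal

theorem IsPartition.eq_of_mem {G : Type*} {m : ℕ} {E : Fin m → Set G} (hE : IsPartition E)
    {x : G} {i j : Fin m} (hi : x ∈ E i) (hj : x ∈ E j) : i = j := by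
  by_contra hij
  exact disjoint_left.mp (hE.1 i j hij) hi hj

theorem ind_mem_eq_indicator {α : Type*} (s : Set α) (a : α) : ind (a ∈ s) = s.indicator 1 a := by
  by_cases h : a ∈ s <;> simp [ind, h]

section Configurations

variable {G : Type*} [Group G] {n m : ℕ} {g : Fin n → G} {E : Fin m → Set G}

theorem mem_xzero_iff {C : Fin (n + 1) → Fin m} {x : G} :
    x ∈ xzero g E C ↔ ∀ j, ghat g j * x ∈ E (C j) := by
  simp [xzero, ghat, Fin.forall_fin_succ, mem_inv_smul_set_iff]

theorem isConfig_of_mem_xzero {C : Fin (n + 1) → Fin m} {x : G} (hx : x ∈ xzero g E C) :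
    IsConfig g E C :=
  ⟨x, by simpa [ghat] using mem_xzero_iff.mp hx 0,
    fun i => by simpa [ghat] using mem_xzero_iff.mp hx i.succ⟩

theorem pairwise_disjoint_xzero (hE : IsPartition E) : Pairwise (Disjoint on xzero g E) :=
  fun _ _ hne => disjoint_left.mpr fun _ hx hx' => hne <| funext fun j =>
    hE.eq_of_mem (mem_xzero_iff.mp hx j) (mem_xzero_iff.mp hx' j)

theorem iUnion_xzero (hE : IsPartition E) :
    ⋃ C : {C // IsConfig g E C}, xzero g E C.1 = univ := by
  choose idx hidx using fun y : G => mem_iUnion.mp (hE.2 ▸ mem_univ y)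
  refine eq_univ_of_forall fun x => ?_
  have hx : x ∈ xzero g E fun j => idx (ghat g j * x) := mem_xzero_iff.mpr fun j => hidx _
  exact mem_iUnion.mpr ⟨⟨_, isConfig_of_mem_xzero hx⟩, hx⟩

theorem xj_subset (C : Fin (n + 1) → Fin m) (j : Fin (n + 1)) : xj g E C j ⊆ E (C j) := by
  rintro _ ⟨x, hx, rfl⟩
  exact mem_xzero_iff.mp hx j

theorem biUnion_xzero_of_xj_subset (hE : IsPartition E) (j : Fin (n + 1)) (i : Fin m) :
    ⋃ C ∈ {C : {C // IsConfig g E C} | xj g E C.1 j ⊆ E i}, xzero g E C.1 = (ghat g j)⁻¹ • E i := by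
  ext x
  simp only [mem_iUnion, mem_ofPred_eq, exists_prop, mem_inv_smul_set_iff, smul_eq_mul]
  constructor
  · rintro ⟨C, hC, hx⟩
    exact hC (smul_mem_smul_set hx)
  · intro hx
    obtain ⟨C, hxC⟩ := mem_iUnion.mp ((iUnion_xzero hE).symm ▸ mem_univ x)
    refine ⟨C, ?_, hxC⟩
    rw [← hE.eq_of_mem (mem_xzero_iff.mp hxC j) hx]
    exact xj_subset C.1 j

end Configurations

/-- **Main theorem.** If some subsystem of the system of configuration equations `Eq(g, E)`
(encoded by the (0,1)-matrices `V`, `W` given by a list of triples `(iT t, jT t, kT t)`,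
with `∑_t (W_t - V_t)` strictly positive) is normal, then `G` is not amenable and `G`
admits a paradoxical decomposition. -/
theorem normal_subsystem_paradoxical {G : Type*} [Group G] {n m : ℕ}
    (g : Fin n → G) (E : Fin m → Set G) (hE : IsPartition E)
    (p : ℕ) (iT : Fin p → Fin m) (jT kT : Fin p → Fin (n + 1))
    (V W : Matrix (Fin p) {C : Fin (n + 1) → Fin m // IsConfig g E C} ℝ)
    (hV : ∀ t C, V t C = ind (xj g E C.1 (kT t) ⊆ E (iT t)))
    (hW : ∀ t C, W t C = ind (xj g E C.1 (jT t) ⊆ E (iT t)))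
    (hpos : ∀ C, 0 < ∑ t, (W t C - V t C))
    (hnorm : IsNormal V W) :
    ¬ HasLeftInvariantMean G ∧ IsParadoxical G := by
  obtain ⟨σ, hσ⟩ := hnorm.exists_perm_sum_Iio_nonneg
  let P : {C // IsConfig g E C} → Set G := fun C => xzero g E C.1
  let K : Fin p → Set {C // IsConfig g E C} := fun t => {C | xj g E C.1 (kT t) ⊆ E (iT t)}
  let J : Fin p → Set {C // IsConfig g E C} := fun t => {C | xj g E C.1 (jT t) ⊆ E (iT t)}
  have hVK : ∀ t C, V t C = (K t).indicator 1 C := fun t C =>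
    (hV t C).trans (ind_mem_eq_indicator (K t) C)
  have hWJ : ∀ t C, W t C = (J t).indicator 1 C := fun t C =>
    (hW t C).trans (ind_mem_eq_indicator (J t) C)
  have hP : Pairwise (Disjoint on P) :=
    (pairwise_disjoint_xzero hE).comp_of_injective Subtype.val_injective
  have hcopies := (hasCopies_one hP).exchange_iterate hP (K ∘ σ) (J ∘ σ)
    (fun t => by
      simpa only [P, K, J, comp_apply, biUnion_xzero_of_xj_subset hE] using
        equidecomposable_smul_smul _ _ _)
    (fun t C hC => by
      simpa [hVK, hWJ] using hσ t C ((hVK _ _).trans (indicator_of_mem hC 1)))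
  have hpar := hcopies.isParadoxical hP (iUnion_xzero hE) fun C => by
    simpa [← hVK, ← hWJ, Finset.sum_apply, Equiv.sum_comp σ (fun t => V t C),
      Equiv.sum_comp σ (fun t => W t C)] using hpos C
  exact ⟨not_hasLeftInvariantMean_of_isParadoxical hpar, hpar⟩

end PaperStmt
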